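/- Let p, q ≥ 1 be integers and (l̃_n) defined by l̃₀ = 2, l̃₁ = p, l̃_n = p·l̃_{n−1} + q·l̃_{n−2}. Then the spectral norm of the circulant matrix C(l̃₀, …, l̃_{n−1}) equals (l̃_n + q·l̃_{n−1} + p − 2) / (p + q − 1). -/

import Mathlib

open scoped Matrix.Norms.L2Operator

/-!
The matrix has nonnegative entries and every row and column sums to `S = l̃₀ + ⋯ + l̃_{n-1}`.
The Schur test (Cauchy–Schwarz on each row, weighted by the entries) bounds its spectral norm by
`S`, and the all-ones vector is an eigenvector with eigenvalue `S`, so the norm is exactly `S`.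
Summing the recurrence gives `(p + q - 1) S = l̃_n + q l̃_{n-1} + p - 2`.
-/

namespace Matrix

variable {𝕜 m n : Type*} [RCLike 𝕜] [Fintype m] [Fintype n] [DecidableEq n]

theorem l2_opNorm_le_sqrt_of_sum_norm_le (A : Matrix m n 𝕜) {r c : ℝ} (hr : 0 ≤ r)
    (hrow : ∀ i, ∑ j, ‖A i j‖ ≤ r) (hcol : ∀ j, ∑ i, ‖A i j‖ ≤ c) :
    ‖A‖ ≤ √(r * c) := by
  rw [l2_opNorm_def]
  refine ContinuousLinearMap.opNorm_le_bound _ (Real.sqrt_nonneg _) fun x => ?_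
  have hrow_sq (i : m) : ‖(A *ᵥ x) i‖ ^ 2 ≤ r * ∑ j, ‖A i j‖ * ‖x j‖ ^ 2 := by
    calc ‖(A *ᵥ x) i‖ ^ 2 ≤ (∑ j, ‖A i j‖ * ‖x j‖) ^ 2 := by
          gcongr
          exact (norm_sum_le _ _).trans_eq (by simp_rw [norm_mul])
      _ ≤ (∑ j, ‖A i j‖) * ∑ j, ‖A i j‖ * ‖x j‖ ^ 2 :=
          Finset.sum_sq_le_sum_mul_sum_of_sq_le_mul _ (fun _ _ => norm_nonneg _)
            (fun _ _ => by positivity) fun _ _ => le_of_eq (by ring)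
      _ ≤ r * ∑ j, ‖A i j‖ * ‖x j‖ ^ 2 := by gcongr; exact hrow i
  have hsum : ∑ i, ‖(A *ᵥ x) i‖ ^ 2 ≤ (√(r * c) * ‖x‖) ^ 2 := by
    calc ∑ i, ‖(A *ᵥ x) i‖ ^ 2 ≤ ∑ i, r * ∑ j, ‖A i j‖ * ‖x j‖ ^ 2 :=
          Finset.sum_le_sum fun i _ => hrow_sq i
      _ = r * ∑ j, (∑ i, ‖A i j‖) * ‖x j‖ ^ 2 := by
          rw [← Finset.mul_sum, Finset.sum_comm]
          simp_rw [Finset.sum_mul]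
      _ ≤ r * ∑ j, c * ‖x j‖ ^ 2 := by gcongr with j; exact hcol j
      _ ≤ (√(r * c) * ‖x‖) ^ 2 := by
          rw [mul_pow, EuclideanSpace.norm_sq_eq, ← Finset.mul_sum, ← mul_assoc, Real.sq_sqrt']
          gcongr
          exact le_max_left _ _
  exact (sq_le_sq₀ (norm_nonneg _) (by positivity)).1 ((EuclideanSpace.norm_sq_eq _).trans_le hsum)

theorem norm_le_l2_opNorm_of_mulVec_eq_smul (A : Matrix n n 𝕜) {v : n → 𝕜} {c : 𝕜}
    (hv : v ≠ 0) (hAv : A *ᵥ v = c • v) : ‖c‖ ≤ ‖A‖ := by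
  have hvpos : 0 < ‖WithLp.toLp 2 v‖ := norm_pos_iff.2 (by simpa using hv)
  have := A.l2_opNorm_mulVec (WithLp.toLp 2 v)
  rw [WithLp.ofLp_toLp, hAv] at this
  exact le_of_mul_le_mul_right ((norm_smul c (WithLp.toLp 2 v)).symm.trans_le this) hvpos

theorem l2_opNorm_eq_of_nonneg_of_sum_eq [Nonempty n] (A : Matrix n n ℝ) {s : ℝ}
    (hA : ∀ i j, 0 ≤ A i j) (hrow : ∀ i, ∑ j, A i j = s) (hcol : ∀ j, ∑ i, A i j = s) :
    ‖A‖ = s := by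
  obtain ⟨i₀⟩ := ‹Nonempty n›
  have hs : 0 ≤ s := hrow i₀ ▸ Finset.sum_nonneg fun j _ => hA i₀ j
  have hnorm (i j : n) : ‖A i j‖ = A i j := Real.norm_of_nonneg (hA i j)
  apply le_antisymm
  · simpa [Real.sqrt_mul_self hs] using
      A.l2_opNorm_le_sqrt_of_sum_norm_le (c := s) hs (fun i => by simp [hnorm, hrow])
        (fun j => by simp [hnorm, hcol])
  · have hAv : A *ᵥ (fun _ => 1) = s • fun _ => 1 := by
      ext i
      simp [mulVec, dotProduct, hrow]
    simpa [abs_of_nonneg hs] using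
      A.norm_le_l2_opNorm_of_mulVec_eq_smul (one_ne_zero' (n → ℝ)) hAv

theorem l2_opNorm_circulant_of_nonneg {G : Type*} [AddGroup G] [Fintype G] [DecidableEq G]
    {v : G → ℝ} (hv : ∀ k, 0 ≤ v k) : ‖circulant v‖ = ∑ k, v k :=
  l2_opNorm_eq_of_nonneg_of_sum_eq _ (fun _ _ => hv _)
    (fun i => (Equiv.subLeft i).sum_comp v) (fun j => (Equiv.subRight j).sum_comp v)

end Matrix

theorem nonneg_of_two_step_recurrence {R : Type*} [Semiring R] [PartialOrder R] [IsOrderedRing R]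
    {p q : R} (hp : 0 ≤ p) (hq : 0 ≤ q) {l : ℕ → R} (h0 : 0 ≤ l 0) (h1 : 0 ≤ l 1)
    (hl : ∀ m, l (m + 2) = p * l (m + 1) + q * l m) (m : ℕ) : 0 ≤ l m := by
  induction m using Nat.twoStepInduction with
  | zero => exact h0
  | one => exact h1
  | more m ih₀ ih₁ => rw [hl]; positivity

theorem mul_sum_range_of_two_step_recurrence {R : Type*} [CommRing R] {p q : R} {l : ℕ → R}
    (hl : ∀ m, l (m + 2) = p * l (m + 1) + q * l m) (m : ℕ) :
    (p + q - 1) * ∑ k ∈ Finset.range (m + 1), l k = l (m + 1) + q * l m + (p - 1) * l 0 - l 1 := by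
  induction m with
  | zero => simp; ring
  | succ m ih => rw [Finset.sum_range_succ, mul_add, ih, hl]; ring

theorem spectral_norm_circulant_generalized_lucas
    (p q : ℤ) (hp : 1 ≤ p) (hq : 1 ≤ q)
    (l : ℕ → ℤ) (hl0 : l 0 = 2) (hl1 : l 1 = p)
    (hlrec : ∀ m : ℕ, l (m + 2) = p * l (m + 1) + q * l m)
    (n : ℕ) (hn : 1 ≤ n) :
    ‖(Matrix.of fun i j : Fin n => (l ((j - i : Fin n) : ℕ) : ℝ))‖ =
      ((l n : ℝ) + q * l (n - 1) + p - 2) / (p + q - 1) := by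
  obtain ⟨m, rfl⟩ : ∃ m, n = m + 1 := ⟨n - 1, by omega⟩
  have hp' : (1 : ℝ) ≤ p := by exact_mod_cast hp
  have hq' : (1 : ℝ) ≤ q := by exact_mod_cast hq
  set v : Fin (m + 1) → ℝ := fun k => l k
  have hrec (k : ℕ) : (l (k + 2) : ℝ) = p * l (k + 1) + q * l k := by exact_mod_cast hlrec k
  have hv : ∀ k, 0 ≤ v k := fun k =>
    nonneg_of_two_step_recurrence (l := fun k => (l k : ℝ)) (by linarith) (by linarith)
      (by simp [hl0]) (by simp [hl1]; linarith) hrec k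
  have hC : (Matrix.of fun i j : Fin (m + 1) => (l ((j - i : Fin (m + 1)) : ℕ) : ℝ))
      = (Matrix.circulant v).conjTranspose := by
    ext i j
    simp [v, Matrix.circulant]
  have hsum := mul_sum_range_of_two_step_recurrence (l := fun k => (l k : ℝ)) hrec m
  rw [hC, Matrix.l2_opNorm_conjTranspose, Matrix.l2_opNorm_circulant_of_nonneg hv,
    Fin.sum_univ_eq_sum_range (fun k => (l k : ℝ)), eq_div_iff (by linarith)]
  simp only [hl0, hl1, Nat.add_sub_cancel] at hsum ⊢
  push_cast at hsum
  linarith
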